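/- Let μ ≥ 1 and k ≥ 3, and let F be a multihypergraph in which every edge has multiplicity at most μ and minimum degree δ(F) ≥ μ·2^(k−2) + 2. Then F contains a Berge cycle of length at least k. -/

import Mathlib

/-- A multihypergraph `F` (a multiset of hyperedges) has a Berge cycle of length `ℓ`:
there are `ℓ` distinct vertices `v i` and `ℓ` distinct hyperedge instances `e i`
(i.e. the multiset of the `e i` is a sub-multiset of `F`) with `v i, v (i+1) ∈ e i`
cyclically. -/
def MHasBergeCycle {V : Type*} (F : Multiset (Finset V)) (ℓ : ℕ) : Prop :=
  ∃ (v : Fin ℓ → V) (e : Fin ℓ → Finset V),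
    Function.Injective v ∧
    Multiset.map e (Finset.univ : Finset (Fin ℓ)).val ≤ F ∧
    ∀ i : Fin ℓ, v i ∈ e i ∧ v ⟨(i.1 + 1) % ℓ, Nat.mod_lt _ i.pos⟩ ∈ e i

/-!
A multihypergraph is modelled as an indexed family `E : ι → Finset V`, an index being an edge
instance; `F` itself is the family indexed by its own elements (`Multiset.ToType`).

Suppose there is no Berge cycle of length at least `k` and take a longest Berge path
`v 0, …, v n` with edges `e 0, …, e (n - 1)`. An edge through the endpoint `v n` is either a path
edge `e j` with `j ≥ n + 1 - k`, or an unused edge inside the set `W` of the last `k - 1` path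
vertices: otherwise the path extends or closes into a long cycle. At most `μ * 2 ^ (k - 2)` edges
through `v n` lie inside `W`, so the degree bound gives a path edge `e q` through `v n` with
`q ≥ n + 2 - k` that leaves `W`, and a second count gives an unused edge `f` through `v q` and
`v n`. Rotating the path along `f` yields a longest path whose endpoint `v (q + 1)` lies in the now
unused edge `e q`, which leaves `W`: a contradiction.
-/

open Finset

namespace Berge

variable {V ι : Type*} (E : ι → Finset V)

structure IsPath (n : ℕ) (v : ℕ → V) (e : ℕ → ι) : Prop where
  injOn_vertex : Set.InjOn v (Set.Iic n)
  injOn_edge : Set.InjOn e (Set.Iio n)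
  mem_edge : ∀ i < n, v i ∈ E (e i) ∧ v (i + 1) ∈ E (e i)

theorem mhasBergeCycle_of_injOn [Fintype ι] {ℓ : ℕ} {w : ℕ → V} {c : ℕ → ι}
    (hw : Set.InjOn w (Set.Iio ℓ)) (hc : Set.InjOn c (Set.Iio ℓ))
    (hmem : ∀ i < ℓ, w i ∈ E (c i) ∧ w ((i + 1) % ℓ) ∈ E (c i)) :
    MHasBergeCycle (univ.val.map E) ℓ := by
  have hc' : Function.Injective fun i : Fin ℓ => c i := fun i j h => Fin.ext (hc i.2 j.2 h)
  refine ⟨fun i => w i, fun i => E (c i), fun i j h => Fin.ext (hw i.2 j.2 h), ?_,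
    fun i => hmem i i.2⟩
  calc univ.val.map (fun i : Fin ℓ => E (c i)) = (univ.map ⟨_, hc'⟩).val.map E := by
        simp only [map_val, Multiset.map_map, Function.comp_def, Function.Embedding.coeFn_mk]
    _ ≤ univ.val.map E := Multiset.map_le_map (val_le_iff.mpr (subset_univ _))

/-- Edges through `t` inside `W` are determined by their trace on `W.erase t`. -/
theorem card_filter_mem_subset_le [Fintype ι] [DecidableEq V] {μ : ℕ}
    (hmult : ∀ A, #{i | E i = A} ≤ μ) {W : Finset V} {t : V} (ht : t ∈ W) :
    #{i | t ∈ E i ∧ E i ⊆ W} ≤ μ * 2 ^ (#W - 1) := by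
  rw [← card_erase_of_mem ht, ← card_powerset]
  refine card_le_mul_card_image_of_maps_to (f := fun i => (E i).erase t) ?_ μ ?_
  · intro i hi
    simp only [mem_filter, mem_univ, true_and] at hi
    exact mem_powerset.mpr (erase_subset_erase t hi.2)
  · intro B _
    refine (card_le_card fun i hi => ?_).trans (hmult (insert t B))
    simp only [mem_filter, mem_univ, true_and] at hi ⊢
    rw [← hi.2, insert_erase hi.1.1]

def lastVertices [DecidableEq V] (v : ℕ → V) (n r : ℕ) : Finset V :=
  (Icc (n + 1 - r) n).image v

theorem card_lastVertices_le [DecidableEq V] (v : ℕ → V) (n r : ℕ) :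
    #(lastVertices v n r) ≤ r :=
  card_image_le.trans (by simp only [Nat.card_Icc]; omega)

theorem mem_lastVertices [DecidableEq V] {v : ℕ → V} {n r j : ℕ} (hj : n + 1 - r ≤ j)
    (hjn : j ≤ n) : v j ∈ lastVertices v n r :=
  mem_image_of_mem v (mem_Icc.mpr ⟨hj, hjn⟩)

theorem isPath_zero (v : ℕ → V) (e : ℕ → ι) : IsPath E 0 v e where
  injOn_vertex a ha b hb _ := by simp_all
  injOn_edge a ha := absurd ha (Nat.not_lt_zero a)
  mem_edge i hi := absurd hi (Nat.not_lt_zero i)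

namespace IsPath

variable {E} {n : ℕ} {v : ℕ → V} {e : ℕ → ι}

theorem drop (hP : IsPath E n v e) (j : ℕ) :
    IsPath E (n - j) (fun i => v (j + i)) (fun i => e (j + i)) where
  injOn_vertex a ha b hb h := by
    simp only [Set.mem_Iic] at ha hb
    by_cases hj : j ≤ n
    · have := hP.injOn_vertex (x₁ := j + a) (x₂ := j + b)
        (by simp only [Set.mem_Iic]; omega) (by simp only [Set.mem_Iic]; omega) h
      omega
    · omega
  injOn_edge a ha b hb h := by
    simp only [Set.mem_Iio] at ha hb
    have := hP.injOn_edge (x₁ := j + a) (x₂ := j + b)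
      (by simp only [Set.mem_Iio]; omega) (by simp only [Set.mem_Iio]; omega) h
    omega
  mem_edge i hi := by simpa only [← add_assoc] using hP.mem_edge (j + i) (by omega)

theorem length_le [Fintype ι] (hP : IsPath E n v e) : n ≤ Fintype.card ι := by
  simpa using card_le_card_of_injOn e (s := range n) (t := univ) (fun _ _ => mem_univ _)
    (by simpa only [coe_range] using hP.injOn_edge)

theorem mhasBergeCycle [Fintype ι] (hP : IsPath E n v e) {g : ι} (hg : ∀ i < n, e i ≠ g)
    (h0 : v 0 ∈ E g) (hn : v n ∈ E g) : MHasBergeCycle (univ.val.map E) (n + 1) := by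
  refine mhasBergeCycle_of_injOn E (c := fun i => if i < n then e i else g)
    (fun a ha b hb => hP.injOn_vertex (Nat.lt_succ_iff.mp ha) (Nat.lt_succ_iff.mp hb))
    (fun a ha b hb h => ?_) (fun i hi => ?_)
  · simp only [Set.mem_Iio] at ha hb
    dsimp only at h
    split_ifs at h with h1 h2 h2
    · exact hP.injOn_edge h1 h2 h
    · exact absurd h (hg a h1)
    · exact absurd h.symm (hg b h2)
    · omega
  · split_ifs with h1
    · rw [Nat.mod_eq_of_lt (by omega)]
      exact hP.mem_edge i h1
    · obtain rfl : i = n := by omega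
      rw [Nat.mod_self]
      exact ⟨hn, h0⟩

theorem mhasBergeCycle_of_mem [Fintype ι] (hP : IsPath E n v e) {j : ℕ} (hjn : j ≤ n)
    {g : ι} (hg : ∀ i, j ≤ i → i < n → e i ≠ g) (hj : v j ∈ E g) (hn : v n ∈ E g) :
    MHasBergeCycle (univ.val.map E) (n - j + 1) :=
  (hP.drop j).mhasBergeCycle (fun i hi => hg _ (by omega) (by omega)) (by simpa using hj)
    (by simpa only [Nat.add_sub_cancel' hjn] using hn)

theorem snoc (hP : IsPath E n v e) {g : ι} (hg : ∀ i < n, e i ≠ g) {z : V}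
    (hz : ∀ i ≤ n, v i ≠ z) (hn : v n ∈ E g) (hzg : z ∈ E g) :
    IsPath E (n + 1) (fun i => if i ≤ n then v i else z)
      (fun i => if i < n then e i else g) where
  injOn_vertex a ha b hb h := by
    simp only [Set.mem_Iic] at ha hb
    dsimp only at h
    split_ifs at h with h1 h2 h2
    · exact hP.injOn_vertex h1 h2 h
    · exact absurd h (hz a h1)
    · exact absurd h.symm (hz b h2)
    · omega
  injOn_edge a ha b hb h := by
    simp only [Set.mem_Iio] at ha hb
    dsimp only at h
    split_ifs at h with h1 h2 h2
    · exact hP.injOn_edge h1 h2 h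
    · exact absurd h (hg a h1)
    · exact absurd h.symm (hg b h2)
    · omega
  mem_edge i hi := by
    by_cases h1 : i < n
    · simp only [if_pos h1, if_pos h1.le, if_pos (Nat.succ_le_of_lt h1)]
      exact hP.mem_edge i h1
    · obtain rfl : i = n := by omega
      simp only [lt_irrefl, le_refl, Nat.not_succ_le_self, if_true, if_false]
      exact ⟨hn, hzg⟩

/-- Pósa rotation: an unused edge `f` through `v q` and the endpoint `v n` turns the path into
`v 0, …, v q, v n, v (n - 1), …, v (q + 1)`, which frees the edge `e q`. -/
theorem reroute (hP : IsPath E n v e) {q : ℕ} (hqn : q < n) {f : ι}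
    (hf : ∀ i < n, e i ≠ f) (hq : v q ∈ E f) (hn : v n ∈ E f) :
    IsPath E n (fun i => v (if i ≤ q then i else n + 1 + q - i))
      (fun i => if i < q then e i else if i = q then f else e (n + q - i)) where
  injOn_vertex a ha b hb h := by
    simp only [Set.mem_Iic] at ha hb
    have := hP.injOn_vertex (x₁ := if a ≤ q then a else n + 1 + q - a)
      (x₂ := if b ≤ q then b else n + 1 + q - b)
      (by simp only [Set.mem_Iic]; split_ifs <;> omega)
      (by simp only [Set.mem_Iic]; split_ifs <;> omega) h
    split_ifs at this <;> omega
  injOn_edge a ha b hb h := by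
    simp only [Set.mem_Iio] at ha hb
    dsimp only at h
    split_ifs at h <;> first
      | omega
      | exact absurd h (hf _ (by omega))
      | exact absurd h.symm (hf _ (by omega))
      | have := hP.injOn_edge (by simp only [Set.mem_Iio]; omega)
          (by simp only [Set.mem_Iio]; omega) h
        omega
  mem_edge i hi := by
    by_cases h1 : i < q
    · simp only [if_pos h1, if_pos h1.le, if_pos (Nat.succ_le_of_lt h1)]
      exact hP.mem_edge i (by omega)
    by_cases h2 : i = q
    · subst h2
      simp only [le_refl, if_true, lt_irrefl, if_false, Nat.not_succ_le_self, if_true,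
        show n + 1 + i - (i + 1) = n by omega]
      exact ⟨hq, hn⟩
    · simp only [if_neg h1, if_neg h2, if_neg (show ¬ i ≤ q by omega),
        if_neg (show ¬ i + 1 ≤ q by omega), show n + 1 + q - i = n + q - i + 1 by omega,
        show n + 1 + q - (i + 1) = n + q - i by omega]
      exact (hP.mem_edge (n + q - i) (by omega)).symm

section Longest

variable [Fintype ι] {k : ℕ}

theorem lt_add_of_mem_edge (hP : IsPath E n v e)
    (hcyc : ∀ ℓ, k ≤ ℓ → ¬ MHasBergeCycle (univ.val.map E) ℓ) {i : ℕ} (hi : i < n)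
    (hn : v n ∈ E (e i)) : n < i + k := by
  by_contra! hik
  refine hcyc (n - (i + 1) + 1) (by omega) (hP.mhasBergeCycle_of_mem hi (fun j hj hjn h => ?_)
    (hP.mem_edge i hi).2 hn)
  have := hP.injOn_edge (show j ∈ Set.Iio n from hjn) (show i ∈ Set.Iio n from hi) h
  omega

theorem subset_lastVertices [DecidableEq V] (hP : IsPath E n v e)
    (hmax : ∀ v' e', ¬ IsPath E (n + 1) v' e')
    (hcyc : ∀ ℓ, k ≤ ℓ → ¬ MHasBergeCycle (univ.val.map E) ℓ) {g : ι}
    (hg : ∀ i < n, e i ≠ g) (hn : v n ∈ E g) : E g ⊆ lastVertices v n (k - 1) := by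
  intro z hz
  by_cases hold : ∃ j ≤ n, v j = z
  swap
  · exact absurd (hP.snoc hg (fun j hj h => hold ⟨j, hj, h⟩) hn hz) (hmax _ _)
  obtain ⟨j, hjn, rfl⟩ := hold
  by_contra hj
  exact hcyc (n - j + 1) (by by_contra; exact hj (mem_lastVertices (by omega) hjn))
    (hP.mhasBergeCycle_of_mem hjn (fun i _ hi => hg i hi) hz hn)

variable [DecidableEq V] {μ : ℕ}

theorem exists_edge_not_subset_lastVertices (hP : IsPath E n v e)
    (hmax : ∀ v' e', ¬ IsPath E (n + 1) v' e')
    (hcyc : ∀ ℓ, k ≤ ℓ → ¬ MHasBergeCycle (univ.val.map E) ℓ) (hk : 2 ≤ k)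
    (hmult : ∀ A, #{i | E i = A} ≤ μ) (hdeg : μ * 2 ^ (k - 2) + 2 ≤ #{i | v n ∈ E i}) :
    ∃ q, n + 1 - (k - 1) ≤ q ∧ q < n ∧ v n ∈ E (e q) ∧
      ¬ E (e q) ⊆ lastVertices v n (k - 1) := by
  classical
  by_contra! hlate
  set W := lastVertices v n (k - 1)
  have hsub : ({i | v n ∈ E i} : Finset ι) ⊆
      ({i | v n ∈ E i ∧ E i ⊆ W} : Finset ι) ∪ {e (n + 1 - k)} := by
    intro i hi
    simp only [mem_filter, mem_univ, true_and] at hi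
    by_cases hW : E i ⊆ W
    · exact mem_union_left _ (by simp [hi, hW])
    obtain ⟨j, hj, rfl⟩ : ∃ j < n, e j = i := by
      by_contra! hunused
      exact hW (hP.subset_lastVertices hmax hcyc hunused hi)
    have := hP.lt_add_of_mem_edge hcyc hj hi
    have : ¬ n + 1 - (k - 1) ≤ j := fun h => hW (hlate j h hj hi)
    exact mem_union_right _ (mem_singleton.mpr (by congr 1; omega))
  have hW : #W - 1 ≤ k - 2 := by have : #W ≤ k - 1 := card_lastVertices_le v n (k - 1); omega
  have hinW : #{i | v n ∈ E i ∧ E i ⊆ W} ≤ μ * 2 ^ (#W - 1) :=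
    card_filter_mem_subset_le E hmult (mem_lastVertices (by omega) le_rfl)
  have := (card_le_card hsub).trans (card_union_le _ _)
  have := Nat.mul_le_mul_left μ (Nat.pow_le_pow_right two_pos hW)
  rw [card_singleton] at *
  omega

/-- Otherwise the edges through `v n` are at most `μ * 2 ^ (k - 3)` unused ones inside the last
`k - 1` vertices but avoiding `v q`, and at most `k - 1` path edges. -/
theorem exists_unused_edge_through (hP : IsPath E n v e)
    (hmax : ∀ v' e', ¬ IsPath E (n + 1) v' e')
    (hcyc : ∀ ℓ, k ≤ ℓ → ¬ MHasBergeCycle (univ.val.map E) ℓ) (hk : 3 ≤ k) (hμ : 1 ≤ μ)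
    (hmult : ∀ A, #{i | E i = A} ≤ μ) (hdeg : μ * 2 ^ (k - 2) + 2 ≤ #{i | v n ∈ E i})
    {q : ℕ} (hlo : n + 1 - (k - 1) ≤ q) (hqn : q < n) :
    ∃ f, (∀ i < n, e i ≠ f) ∧ v q ∈ E f ∧ v n ∈ E f := by
  classical
  by_contra! hnone
  set W := (lastVertices v n (k - 1)).erase (v q)
  have hsub : ({i | v n ∈ E i} : Finset ι) ⊆
      ({i | v n ∈ E i ∧ E i ⊆ W} : Finset ι) ∪ (Ico (n + 1 - k) n).image e := by
    intro i hi
    simp only [mem_filter, mem_univ, true_and] at hi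
    by_cases hused : ∃ j < n, e j = i
    · obtain ⟨j, hj, rfl⟩ := hused
      have := hP.lt_add_of_mem_edge hcyc hj hi
      exact mem_union_right _ (mem_image_of_mem e (mem_Ico.mpr ⟨by omega, hj⟩))
    push Not at hused
    refine mem_union_left _ (mem_filter.mpr ⟨mem_univ _, hi, fun z hz => mem_erase.mpr ⟨?_,
      hP.subset_lastVertices hmax hcyc hused hi hz⟩⟩)
    rintro rfl
    exact hnone i hused hz hi
  have hvn : v n ≠ v q := fun h => by
    have := hP.injOn_vertex Set.self_mem_Iic (Set.mem_Iic.mpr hqn.le) h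
    omega
  have hW : #W - 1 ≤ k - 3 := by
    have : #(lastVertices v n (k - 1)) ≤ k - 1 := card_lastVertices_le v n (k - 1)
    rw [card_erase_of_mem (mem_lastVertices hlo hqn.le)]
    omega
  have hinW : #{i | v n ∈ E i ∧ E i ⊆ W} ≤ μ * 2 ^ (#W - 1) :=
    card_filter_mem_subset_le E hmult (mem_erase.mpr ⟨hvn, mem_lastVertices (by omega) le_rfl⟩)
  have := (card_le_card hsub).trans ((card_union_le _ _).trans (add_le_add hinW card_image_le))
  have := Nat.mul_le_mul_left μ (Nat.pow_le_pow_right two_pos hW)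
  have hpow : μ * 2 ^ (k - 2) = 2 * (μ * 2 ^ (k - 3)) := by
    rw [show k - 2 = k - 3 + 1 by omega, pow_succ]
    ring
  have : k - 3 < μ * 2 ^ (k - 3) :=
    Nat.lt_two_pow_self.trans_le (Nat.le_mul_of_pos_left _ hμ)
  rw [Nat.card_Ico] at *
  omega

theorem exists_isPath_add_one (hP : IsPath E n v e)
    (hcyc : ∀ ℓ, k ≤ ℓ → ¬ MHasBergeCycle (univ.val.map E) ℓ) (hk : 3 ≤ k) (hμ : 1 ≤ μ)
    (hmult : ∀ A, #{i | E i = A} ≤ μ) (hdeg : ∀ x, μ * 2 ^ (k - 2) + 2 ≤ #{i | x ∈ E i}) :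
    ∃ v' e', IsPath E (n + 1) v' e' := by
  by_contra! hmax
  obtain ⟨q, hlo, hqn, -, hqW⟩ :=
    hP.exists_edge_not_subset_lastVertices hmax hcyc (by omega) hmult (hdeg _)
  obtain ⟨f, hf, hfq, hfn⟩ := hP.exists_unused_edge_through hmax hcyc hk hμ hmult (hdeg _) hlo hqn
  refine hqW ((subset_lastVertices (hP.reroute hqn hf hfq hfn) hmax hcyc (g := e q) ?_ ?_).trans ?_)
  · intro i hi
    split_ifs with h1 h2
    · exact fun h => absurd (hP.injOn_edge (Set.mem_Iio.mpr hi) (Set.mem_Iio.mpr hqn) h)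
        (by omega)
    · exact (hf q hqn).symm
    · exact fun h => absurd (hP.injOn_edge (Set.mem_Iio.mpr (by omega)) (Set.mem_Iio.mpr hqn) h)
        (by omega)
  · simpa only [if_neg (show ¬ n ≤ q by omega), show n + 1 + q - n = q + 1 by omega]
      using (hP.mem_edge q hqn).2
  · intro x hx
    simp only [lastVertices, mem_image, mem_Icc] at hx ⊢
    obtain ⟨i, ⟨hi, hin⟩, rfl⟩ := hx
    exact ⟨_, ⟨by split_ifs <;> omega, by split_ifs <;> omega⟩, rfl⟩

end Longest

end IsPath

theorem exists_mhasBergeCycle [Fintype ι] [DecidableEq V] [Nonempty V] {μ k : ℕ} (hk : 3 ≤ k)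
    (hμ : 1 ≤ μ) (hmult : ∀ A, #{i | E i = A} ≤ μ)
    (hdeg : ∀ x, μ * 2 ^ (k - 2) + 2 ≤ #{i | x ∈ E i}) :
    ∃ ℓ, k ≤ ℓ ∧ MHasBergeCycle (univ.val.map E) ℓ := by
  classical
  by_contra! hcyc
  obtain ⟨i, -⟩ := card_pos.mp (lt_of_lt_of_le (by omega) (hdeg (Classical.arbitrary V)))
  let HasPath n := ∃ v e, IsPath E n v e
  obtain ⟨v, e, hP⟩ : HasPath (Nat.findGreatest HasPath (Fintype.card ι)) :=
    Nat.findGreatest_spec (Nat.zero_le _) ⟨_, _, isPath_zero E (fun _ => Classical.arbitrary V)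
      (fun _ => i)⟩
  obtain ⟨v', e', hP'⟩ := hP.exists_isPath_add_one hcyc hk hμ hmult hdeg
  exact Nat.findGreatest_is_greatest (Nat.lt_succ_self _) hP'.length_le ⟨v', e', hP'⟩

end Berge

theorem Multiset.card_filter_eq_card_filter_univ {α : Type*} [DecidableEq α] (m : Multiset α)
    (p : α → Prop) [DecidablePred p] : Multiset.card (m.filter p) = #{x : m | p x} := by
  conv_lhs => rw [← Multiset.map_univ_coe m]
  rw [Multiset.filter_map, Multiset.card_map]
  rfl

/-- Dirac-type condition for long Berge cycles in multihypergraphs: if `k ≥ 3`, every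
hyperedge of the multihypergraph `F` has multiplicity at most `μ`, and every vertex lies
in at least `μ·2^(k-2) + 2` hyperedges (counted with multiplicity), then `F` contains a
Berge cycle of length at least `k`. -/
theorem stmt_18 {V : Type*} [DecidableEq V] [Nonempty V] (μ k : ℕ) (hμ : 1 ≤ μ)
    (hk : 3 ≤ k) (F : Multiset (Finset V))
    (hmult : ∀ A : Finset V, F.count A ≤ μ)
    (hδ : ∀ v : V, μ * 2 ^ (k - 2) + 2 ≤ Multiset.card (F.filter (fun e => v ∈ e))) :
    ∃ ℓ : ℕ, k ≤ ℓ ∧ MHasBergeCycle F ℓ := by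
  simpa only [Multiset.map_univ_coe] using
    Berge.exists_mhasBergeCycle (fun x : F => (x : Finset V)) hk hμ
      (fun A => by simpa only [Multiset.count_eq_card_filter_eq, eq_comm,
        Multiset.card_filter_eq_card_filter_univ] using hmult A)
      (fun x => by simpa only [Multiset.card_filter_eq_card_filter_univ] using hδ x)
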